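/- arXiv:2411.08675 — 6 statements merged into one kernel-verified Lean document; each statement's English description precedes it below -/
import Mathlib

section
/- Let G be a group, α a normalized 3-cocycle on G with values in U(1), and β_x the associated family of functions. Then for all x, y, z, w ∈ G the twisted 2-cocycle relation holds: β_x(y,z) · β_x(yz,w) = β_x(y,zw) · β_{y⁻¹xy}(z,w). -/
/-- the twisted 2-cocycle relation
`β_x(y,z) · β_x(yz,w) = β_x(y,zw) · β_{y⁻¹xy}(z,w)`
for the family `β` associated to a normalized 3-cocycle `α` on `G` with
values in `U(1)` (the circle group `Circle ⊆ ℂ`). -/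
theorem stmt_0 {G : Type*} [Group G]
    (α : G → G → G → Circle)
    (hcoc : ∀ g₁ g₂ g₃ g₄ : G,
      α g₂ g₃ g₄ * α g₁ (g₂ * g₃) g₄ * α g₁ g₂ g₃ =
        α (g₁ * g₂) g₃ g₄ * α g₁ g₂ (g₃ * g₄))
    (hnorm : ∀ g₁ g₂ : G, α 1 g₁ g₂ = 1 ∧ α g₁ 1 g₂ = 1 ∧ α g₁ g₂ 1 = 1)
    (β : G → G → G → Circle)
    (hβ : ∀ x y z : G,
      β x y z = α x y z * α y z (z⁻¹ * y⁻¹ * x * y * z) / α y (y⁻¹ * x * y) z) :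
    ∀ x y z w : G,
      β x y z * β x (y * z) w = β x y (z * w) * β (y⁻¹ * x * y) z w := by
  intro x y z w
  rw [hβ, hβ, hβ, hβ]
  have P1 := congrArg (fun c : Circle => (c : ℂ)) (hcoc x y z w)
  have P2 := congrArg (fun c : Circle => (c : ℂ)) (hcoc y (y⁻¹ * x * y) z w)
  have P3 := congrArg (fun c : Circle => (c : ℂ)) (hcoc y z (z⁻¹ * y⁻¹ * x * y * z) w)
  have P4 := congrArg (fun c : Circle => (c : ℂ))
    (hcoc y z w (w⁻¹ * z⁻¹ * y⁻¹ * x * y * z * w))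
  push_cast at P1 P2 P3 P4
  simp only [mul_inv_rev, mul_assoc, inv_mul_cancel_left, mul_inv_cancel_left] at *
  have cast : ∀ a b : Circle, (a : ℂ) = (b : ℂ) → a = b := fun a b h => Circle.ext h
  apply cast
  push_cast
  field_simp
  -- name the atoms
  set a1 : ℂ := (α y z w : ℂ) with ha1
  set a2 : ℂ := (α x (y * z) w : ℂ) with ha2
  set a3 : ℂ := (α x y z : ℂ) with ha3
  set b1 : ℂ := (α (x * y) z w : ℂ) with hb1
  set b2 : ℂ := (α x y (z * w) : ℂ) with hb2
  set c1 : ℂ := (α (y⁻¹ * (x * y)) z w : ℂ) with hc1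
  set c2 : ℂ := (α y (y⁻¹ * (x * (y * z))) w : ℂ) with hc2
  set c3 : ℂ := (α y (y⁻¹ * (x * y)) z : ℂ) with hc3
  set d2 : ℂ := (α y (y⁻¹ * (x * y)) (z * w) : ℂ) with hd2
  set e1 : ℂ := (α z (z⁻¹ * (y⁻¹ * (x * (y * z)))) w : ℂ) with he1
  set e3 : ℂ := (α y z (z⁻¹ * (y⁻¹ * (x * (y * z)))) : ℂ) with he3
  set f1 : ℂ := (α (y * z) (z⁻¹ * (y⁻¹ * (x * (y * z)))) w : ℂ) with hf1
  set f2 : ℂ := (α y z (z⁻¹ * (y⁻¹ * (x * (y * (z * w))))) : ℂ) with hf2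
  set g1 : ℂ := (α z w (w⁻¹ * (z⁻¹ * (y⁻¹ * (x * (y * (z * w)))))) : ℂ) with hg1
  set g2 : ℂ := (α y (z * w) (w⁻¹ * (z⁻¹ * (y⁻¹ * (x * (y * (z * w)))))) : ℂ) with hg2
  set h1 : ℂ := (α (y * z) w (w⁻¹ * (z⁻¹ * (y⁻¹ * (x * (y * (z * w)))))) : ℂ) with hh1
  have hne : a1 * c2 * b1 * f2 ≠ 0 := by
    simp [ha1, hc2, hb1, hf2, Circle.coe_ne_zero, mul_ne_zero]
  apply mul_left_cancel₀ hne
  linear_combination (e1 * c2 * e3 * d2 * h1 * b1 * f2) * P1 +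
    (b1 * b2 * d2 * h1 * b1 * f2) * P3 -
    (g1 * g2 * a1 * b2 * f1 * b1 * f2) * P2 -
    (b1 * d2 * b2 * f1 * b1 * f2) * P4
end

section
/- Let G be a group, α a normalized 3-cocycle on G with values in U(1), and x ∈ G. Then the restriction of β_x to the centralizer C_G(x) is a normalized 2-cocycle: β_x(y,e) = β_x(e,y) = 1 for all y ∈ G, and β_x(y,z) · β_x(yz,w) = β_x(y,zw) · β_x(z,w) for all y, z, w ∈ C_G(x). -/
/-- the restriction of `β_x` to the centralizer `C_G(x)` is a
normalized 2-cocycle. -/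
theorem stmt_1 {G : Type*} [Group G]
    (α : G → G → G → Circle)
    (hcoc : ∀ g₁ g₂ g₃ g₄ : G,
      α g₂ g₃ g₄ * α g₁ (g₂ * g₃) g₄ * α g₁ g₂ g₃ =
        α (g₁ * g₂) g₃ g₄ * α g₁ g₂ (g₃ * g₄))
    (hnorm : ∀ g₁ g₂ : G, α 1 g₁ g₂ = 1 ∧ α g₁ 1 g₂ = 1 ∧ α g₁ g₂ 1 = 1)
    (β : G → G → G → Circle)
    (hβ : ∀ x y z : G,
      β x y z = α x y z * α y z (z⁻¹ * y⁻¹ * x * y * z) / α y (y⁻¹ * x * y) z)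
    (x : G) :
    (∀ y : G, β x y 1 = 1 ∧ β x 1 y = 1) ∧
    (∀ y z w : G, y ∈ Subgroup.centralizer ({x} : Set G) →
      z ∈ Subgroup.centralizer ({x} : Set G) →
      w ∈ Subgroup.centralizer ({x} : Set G) →
      β x y z * β x (y * z) w = β x y (z * w) * β x z w) := by
  have h1 : ∀ a b : G, α 1 a b = 1 := fun a b => (hnorm a b).1
  have h2 : ∀ a b : G, α a 1 b = 1 := fun a b => (hnorm a b).2.1
  have h3 : ∀ a b : G, α a b 1 = 1 := fun a b => (hnorm a b).2.2
  have conj_eq : ∀ a : G, x * a = a * x → a⁻¹ * x * a = x := by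
    intro a ha
    rw [mul_assoc, ha, ← mul_assoc, inv_mul_cancel, one_mul]
  constructor
  · intro y
    constructor
    · rw [hβ]; simp [h1, h2, h3]
    · rw [hβ]; simp [h1, h2, h3]
  · intro y z w hy hz hw
    have hxy : x * y = y * x := hy x rfl
    have hxz : x * z = z * x := hz x rfl
    have hxw : x * w = w * x := hw x rfl
    have hxyz : x * (y * z) = (y * z) * x := by
      rw [← mul_assoc, hxy, mul_assoc, hxz, ← mul_assoc]
    have hxzw : x * (z * w) = (z * w) * x := by
      rw [← mul_assoc, hxz, mul_assoc, hxw, ← mul_assoc]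
    have cy : y⁻¹ * x * y = x := conj_eq y hxy
    have cz : z⁻¹ * x * z = x := conj_eq z hxz
    have cyz : (y * z)⁻¹ * x * (y * z) = x := conj_eq _ hxyz
    have czw : (z * w)⁻¹ * x * (z * w) = x := conj_eq _ hxzw
    have dconj : ∀ a b : G, x * a = a * x → x * b = b * x →
        b⁻¹ * a⁻¹ * x * a * b = x := by
      intro a b ha hb
      have hab : x * (a * b) = (a * b) * x := by
        rw [← mul_assoc, ha, mul_assoc, hb, ← mul_assoc]
      have h := conj_eq (a * b) hab
      rw [mul_inv_rev] at h
      calc b⁻¹ * a⁻¹ * x * a * b = b⁻¹ * a⁻¹ * x * (a * b) := by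
            rw [mul_assoc (b⁻¹ * a⁻¹ * x)]
        _ = x := h
    -- rewrite β and simplify conjugates
    rw [hβ, hβ, hβ, hβ, cy, cz,
      dconj y z hxy hxz, dconj (y * z) w hxyz hxw, dconj y (z * w) hxy hxzw,
      dconj z w hxz hxw, cyz]
    -- the four cocycle instances
    have A := hcoc x y z w
    have B := hcoc y x z w
    have C := hcoc y z x w
    have D := hcoc y z w x
    rw [hxy] at A
    rw [hxz] at B
    rw [hxw] at C
    have key : (α y z w * α x (y * z) w * α x y z) *
        (α z x w * α y (z * x) w * α y z x) *
        ((α (y * x) z w * α y x (z * w)) * (α (y * z) w x * α y z (w * x))) =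
        (α (y * x) z w * α x y (z * w)) * (α (y * z) x w * α y z (w * x)) *
        ((α x z w * α y (z * x) w * α y x z) *
          (α z w x * α y (z * w) x * α y z w)) := by
      rw [A, C, ← B, ← D]
    apply Circle.ext
    push_cast
    have keyC := congrArg (fun t : Circle => (t : ℂ)) key
    push_cast at keyC
    have hE : ((α y z w : ℂ) * (α y (z * x) w : ℂ) * (α (y * x) z w : ℂ) *
        (α y z (w * x) : ℂ)) ≠ 0 :=
      mul_ne_zero (mul_ne_zero (mul_ne_zero (Circle.coe_ne_zero _)
        (Circle.coe_ne_zero _)) (Circle.coe_ne_zero _)) (Circle.coe_ne_zero _)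
    field_simp
    refine mul_right_cancel₀ hE ?_
    linear_combination keyC
end

section
/- Let G be a group, α a normalized 3-cocycle on G with values in U(1), n ≥ 1, and g₁, …, g_{2n} ∈ G satisfying g₁⁻¹g₂⁻¹⋯g_{2n}⁻¹ g₁g₂⋯g_{2n} = e (equivalently g₁⋯g_{2n} = g_{2n}⋯g₁). Let x ∈ C_G(g₁,…,g_{2n}) := ⋂_i C_G(g_i), and suppose the 2-cocycle β_x restricted to C_G(x) is a coboundary, i.e. there exists γ : C_G(x) → U(1) with β_x(y,z) = γ(y)γ(z)γ(yz)⁻¹ for all y, z ∈ C_G(x) (this holds in particular when H²(C_G(x), U(1)) = 0). Then ∏_{i=1}^{2n} β_x(g_i, g_{i+1}⋯g_{2n}) · β_x(g_i, g_{i-1}⋯g_1)⁻¹ = 1, where empty products equal e. -/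
private lemma prod_map_inv_eq {G : Type*} [Group G] (l : List G) :
    (l.map fun g => g⁻¹).prod = l.reverse.prod⁻¹ := by
  induction l with
  | nil => simp
  | cons a t ih => simp [ih, mul_inv_rev]

private lemma comm_group_aux {M : Type*} [CommGroup M] (a b c d e : M) :
    a * b * c⁻¹ * (a * d * e⁻¹)⁻¹ = b / c * (e / d) := by
  simp only [div_eq_mul_inv, mul_inv_rev, inv_inv]
  have h : a * b * c⁻¹ * (e * (d⁻¹ * a⁻¹)) = b * c⁻¹ * (e * d⁻¹) * (a * a⁻¹) := by ac_rfl
  rw [h, mul_inv_cancel, mul_one]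

/-- if `g₁⁻¹⋯g_{2n}⁻¹ g₁⋯g_{2n} = e`, `x` centralizes every
`gᵢ`, and `β_x` restricted to `C_G(x)` is a coboundary (with values in the
circle group), then the regularity scalar
`∏ᵢ β_x(gᵢ, g_{i+1}⋯g_{2n}) · β_x(gᵢ, g_{i-1}⋯g₁)⁻¹` equals `1`.
The tuple `(g₁, …, g_{2n})` is encoded as a list `l` of length `2n`. -/
theorem stmt_3 {G : Type*} [Group G]
    (α : G → G → G → Circle)
    (hcoc : ∀ g₁ g₂ g₃ g₄ : G,
      α g₂ g₃ g₄ * α g₁ (g₂ * g₃) g₄ * α g₁ g₂ g₃ =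
        α (g₁ * g₂) g₃ g₄ * α g₁ g₂ (g₃ * g₄))
    (hnorm : ∀ g₁ g₂ : G, α 1 g₁ g₂ = 1 ∧ α g₁ 1 g₂ = 1 ∧ α g₁ g₂ 1 = 1)
    (β : G → G → G → Circle)
    (hβ : ∀ x y z : G,
      β x y z = α x y z * α y z (z⁻¹ * y⁻¹ * x * y * z) / α y (y⁻¹ * x * y) z)
    (n : ℕ) (hn : 1 ≤ n)
    (l : List G) (hlen : l.length = 2 * n)
    (hflat : (l.map fun g => g⁻¹).prod * l.prod = 1)
    (x : G) (hx : ∀ g ∈ l, x * g = g * x)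
    (γ : Subgroup.centralizer ({x} : Set G) → Circle)
    (hcob : ∀ y z : Subgroup.centralizer ({x} : Set G),
      β x (y : G) (z : G) = γ y * γ z * (γ (y * z))⁻¹) :
    ∏ i : Fin l.length,
      β x (l.get i) ((l.drop (i.1 + 1)).prod) *
        (β x (l.get i) ((l.take i.1).reverse.prod))⁻¹ = 1 := by
  classical
  have hmem : ∀ g ∈ l, g ∈ Subgroup.centralizer ({x} : Set G) := by
    intro g hg
    rw [Subgroup.mem_centralizer_iff]
    intro h hh
    rw [Set.mem_singleton_iff] at hh
    subst hh
    exact hx g hg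
  have hd : ∀ i : ℕ, (l.drop i).prod ∈ Subgroup.centralizer ({x} : Set G) := fun i =>
    Subgroup.list_prod_mem _ (fun g hg => hmem g (List.mem_of_mem_drop hg))
  have ht : ∀ i : ℕ, (l.take i).reverse.prod ∈ Subgroup.centralizer ({x} : Set G) := fun i =>
    Subgroup.list_prod_mem _ (fun g hg =>
      hmem g (List.take_subset _ _ (List.mem_reverse.mp hg)))
  set δ : G → Circle :=
    fun g => if h : g ∈ Subgroup.centralizer ({x} : Set G) then γ ⟨g, h⟩ else 1 with hδdef
  have hδ : ∀ (g h : G) (hg : g ∈ Subgroup.centralizer ({x} : Set G))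
      (hh : h ∈ Subgroup.centralizer ({x} : Set G)),
      β x g h = δ g * δ h * (δ (g * h))⁻¹ := by
    intro g h hg hh
    have := hcob ⟨g, hg⟩ ⟨h, hh⟩
    simp only [hδdef, dif_pos hg, dif_pos hh, dif_pos (mul_mem hg hh)]
    exact this
  set f : ℕ → Circle := fun i => δ ((l.drop i).prod) with hf
  set t : ℕ → Circle := fun i => δ ((l.take i).reverse.prod) with htf
  have key : ∀ i : Fin l.length,
      β x (l.get i) ((l.drop (i.1 + 1)).prod) *
        (β x (l.get i) ((l.take i.1).reverse.prod))⁻¹ =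
      (fun k => f (k + 1) / f k * (t (k + 1) / t k)) i.1 := by
    intro i
    have hgl : l.get i ∈ l := List.get_mem l i
    have h1 : l.get i * (l.drop (i.1 + 1)).prod = (l.drop i.1).prod := by
      conv_rhs => rw [List.drop_eq_getElem_cons i.2]
      simp only [List.prod_cons, List.get_eq_getElem]
    have h2 : l.get i * (l.take i.1).reverse.prod = (l.take (i.1 + 1)).reverse.prod := by
      rw [← List.take_concat_get' l i.1 i.2, List.reverse_append]
      simp only [List.reverse_singleton, List.singleton_append, List.prod_cons,
        List.get_eq_getElem]
    rw [hδ _ _ (hmem _ hgl) (hd _), hδ _ _ (hmem _ hgl) (ht _), h1, h2]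
    exact comm_group_aux _ _ _ _ _
  have step1 : (∏ i : Fin l.length,
      β x (l.get i) ((l.drop (i.1 + 1)).prod) *
        (β x (l.get i) ((l.take i.1).reverse.prod))⁻¹) =
      ∏ i ∈ Finset.range l.length, (f (i + 1) / f i * (t (i + 1) / t i)) := by
    rw [← Fin.prod_univ_eq_prod_range]
    exact Finset.prod_congr rfl fun i _ => key i
  rw [step1, Finset.prod_mul_distrib, Finset.prod_range_div, Finset.prod_range_div]
  have hPQ : l.prod = l.reverse.prod := by
    rw [prod_map_inv_eq] at hflat
    exact (inv_mul_eq_one.mp hflat).symm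
  have hfL : f l.length = δ 1 := by simp [hf]
  have ht0 : t 0 = δ 1 := by simp [htf]
  have hf0 : f 0 = t l.length := by simp [hf, htf, hPQ]
  rw [hfL, ht0, hf0, div_mul_div_comm, mul_comm (δ 1) (t l.length), div_self']
end

section
/- Let Γ be a monomial representation of a finite group H on a monomial space (W, X, (W_x)_{x∈X}). An element x ∈ X is regular if and only if (1/|H|) ∑_{h∈H} Γ(h) w_x ≠ 0, where w_x is any nonzero vector of the one-dimensional subspace W_x. -/
/-- in a monomial representation `Γ` of a finite group `H` on a
monomial space `(W, X, (Wx x))`, an element `x ∈ X` is regular iff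
`(1/|H|) ∑_{h∈H} Γ(h) wₓ ≠ 0` for a nonzero vector `wₓ ∈ Wx x`.
The induced permutation action of `H` on `X` is recorded by `σ`. -/
theorem stmt_5 {H : Type*} [Group H] [Fintype H]
    {W : Type*} [AddCommGroup W] [Module ℂ W] [FiniteDimensional ℂ W]
    {X : Type*} [Fintype X] [DecidableEq X]
    (Wx : X → Submodule ℂ W)
    (hdim : ∀ x, Module.finrank ℂ (Wx x) = 1)
    (hint : DirectSum.IsInternal Wx)
    (Γ : Representation ℂ H W)
    (σ : H → X → X)
    (hσ : ∀ h x, Submodule.map (Γ h) (Wx x) = Wx (σ h x))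
    (hσone : ∀ x, σ 1 x = x)
    (hσmul : ∀ h₁ h₂ x, σ (h₁ * h₂) x = σ h₁ (σ h₂ x))
    (x : X) (wx : W) (hwx : wx ∈ Wx x) (hwx0 : wx ≠ 0) :
    (∀ h : H, σ h x = x → ∀ w ∈ Wx x, Γ h w = w) ↔
      ((Fintype.card H : ℂ)⁻¹ • ∑ h : H, Γ h wx) ≠ 0 := by
  have hcard : (Fintype.card H : ℂ) ≠ 0 := by exact_mod_cast Fintype.card_ne_zero
  have hspan : Wx x = Submodule.span ℂ {wx} := by
    refine (Submodule.eq_of_le_of_finrank_le (Submodule.span_le.2 (by simpa using hwx)) ?_).symm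
    rw [hdim x, finrank_span_singleton hwx0]
  have hmem : ∀ h : H, Γ h wx ∈ Wx (σ h x) := fun h => by
    rw [← hσ h x]; exact Submodule.mem_map_of_mem hwx
  constructor
  · intro hreg hzero
    have hsum0 : ∑ h : H, Γ h wx = 0 := by
      by_contra hne
      exact smul_ne_zero (inv_ne_zero hcard) hne hzero
    set u : X → W := fun y => ∑ h ∈ Finset.univ.filter (fun h => σ h x = y), Γ h wx with hu
    have husum : ∑ y : X, u y = 0 := by
      rw [hu, Finset.sum_fiberwise (g := fun h : H => σ h x) (f := fun h => Γ h wx)]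
      exact hsum0
    have humem : ∀ y, u y ∈ Wx y := fun y => by
      refine Submodule.sum_mem _ fun h hh => ?_
      rw [Finset.mem_filter] at hh
      rw [← hh.2]; exact hmem h
    have hInd := hint.submodule_iSupIndep
    have hux : u x = 0 := by
      have h1 : u x = -∑ y ∈ Finset.univ.erase x, u y := by
        have h2 := Finset.add_sum_erase Finset.univ u (Finset.mem_univ x)
        rw [husum] at h2
        exact eq_neg_of_add_eq_zero_left h2
      have h3 : u x ∈ ⨆ y ≠ x, Wx y := by
        rw [h1]
        refine Submodule.neg_mem _ (Submodule.sum_mem _ fun y hy => ?_)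
        have hyx : y ≠ x := (Finset.mem_erase.1 hy).1
        exact Submodule.mem_iSup_of_mem y (Submodule.mem_iSup_of_mem hyx (humem y))
      exact (Submodule.disjoint_def.1 (hInd x)) _ (humem x) h3
    have hS : u x = (Finset.univ.filter (fun h : H => σ h x = x)).card • wx := by
      rw [hu]
      simp only
      rw [Finset.sum_congr rfl fun h hh => hreg h (Finset.mem_filter.1 hh).2 wx hwx,
        Finset.sum_const]
    have h1mem : (1 : H) ∈ Finset.univ.filter (fun h : H => σ h x = x) := by simp [hσone]
    have hc0 : (Finset.univ.filter (fun h : H => σ h x = x)).card ≠ 0 :=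
      Finset.card_ne_zero_of_mem h1mem
    rw [hS, ← Nat.cast_smul_eq_nsmul ℂ] at hux
    exact hwx0 ((smul_eq_zero.1 hux).resolve_left (by exact_mod_cast hc0))
  · intro hne
    by_contra hnotreg
    push_neg at hnotreg
    obtain ⟨h0, hh0, w, hwW, hwne⟩ := hnotreg
    -- Γ h0 wx = c • wx for some c
    have hmemx : Γ h0 wx ∈ Wx x := hh0 ▸ hmem h0
    rw [hspan, Submodule.mem_span_singleton] at hmemx
    obtain ⟨c, hc⟩ := hmemx
    -- c ≠ 1 since Γ h0 w ≠ w and w = a • wx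
    have hcne : c ≠ 1 := by
      intro h1
      apply hwne
      rw [hspan, Submodule.mem_span_singleton] at hwW
      obtain ⟨a, ha⟩ := hwW
      rw [← ha, map_smul, ← hc, h1, one_smul]
    -- ∑ h, Γ h wx = c • ∑ h, Γ h wx
    have hkey : ∑ h : H, Γ h wx = c • ∑ h : H, Γ h wx := by
      calc ∑ h : H, Γ h wx = ∑ h : H, Γ (h * h0) wx := by
            exact (Fintype.sum_equiv (Equiv.mulRight h0) _ _ fun h => rfl).symm
        _ = ∑ h : H, Γ h (Γ h0 wx) := by
            simp [map_mul, Module.End.mul_apply]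
        _ = c • ∑ h : H, Γ h wx := by
            rw [Finset.smul_sum]
            refine Finset.sum_congr rfl fun h _ => ?_
            rw [← hc, map_smul]
    have hs0 : ∑ h : H, Γ h wx = 0 := by
      have h4 : (c - 1) • ∑ h : H, Γ h wx = 0 := by
        rw [sub_smul, one_smul, ← hkey, sub_self]
      exact (smul_eq_zero.1 h4).resolve_left (sub_ne_zero.2 hcne)
    exact hne (by rw [hs0, smul_zero])
end

section
/- Let Γ be a monomial representation of a finite group H on a monomial space (W, X, (W_x)_{x∈X}). Let Y ⊆ X be a set containing exactly one representative from each regular H-orbit in X. For each y ∈ Y choose a nonzero vector w_y ∈ W_y and a left transversal T_y for Stab_H(y) in H (a set containing exactly one element of each left coset of Stab_H(y)). Then the vectors u_y = ∑_{h∈T_y} Γ(h) w_y, for y ∈ Y, form a basis of the invariant subspace W^H. -/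
/-- let `Y` contain exactly one representative of each regular
`H`-orbit in `X`, pick nonzero vectors `w y ∈ Wx y` and left transversals
`T y` of `Stab_H(y)` in `H` (encoded by: every `h ∈ H` lies in the same left
coset of `Stab_H(y)` as a unique `t ∈ T y`, i.e. `σ t y = σ h y`).  Then the
vectors `u_y = ∑_{h ∈ T y} Γ(h) (w y)`, `y ∈ Y`, form a basis of the
invariant subspace `W^H`. -/
theorem stmt_8 {H : Type*} [Group H] [Fintype H]
    {W : Type*} [AddCommGroup W] [Module ℂ W] [FiniteDimensional ℂ W]
    {X : Type*} [Fintype X] [DecidableEq X]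
    (Wx : X → Submodule ℂ W)
    (hdim : ∀ x, Module.finrank ℂ (Wx x) = 1)
    (hint : DirectSum.IsInternal Wx)
    (Γ : Representation ℂ H W)
    (σ : H → X → X)
    (hσ : ∀ h x, Submodule.map (Γ h) (Wx x) = Wx (σ h x))
    (hσone : ∀ x, σ 1 x = x)
    (hσmul : ∀ h₁ h₂ x, σ (h₁ * h₂) x = σ h₁ (σ h₂ x))
    (Y : Finset X)
    (hYreg : ∀ y ∈ Y, ∀ h : H, σ h y = y → ∀ w ∈ Wx y, Γ h w = w)
    (hYrep : ∀ x : X, (∀ h : H, σ h x = x → ∀ w ∈ Wx x, Γ h w = w) →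
      ∃! y : X, y ∈ Y ∧ ∃ h : H, σ h x = y)
    (w : X → W) (hw : ∀ y ∈ Y, w y ∈ Wx y) (hw0 : ∀ y ∈ Y, w y ≠ 0)
    (T : X → Finset H)
    (hT : ∀ y ∈ Y, ∀ h : H, ∃! t : H, t ∈ T y ∧ σ t y = σ h y) :
    LinearIndependent ℂ (fun y : Y => ∑ h ∈ T y, Γ h (w y)) ∧
    Submodule.span ℂ (Set.range fun y : Y => ∑ h ∈ T y, Γ h (w y)) =
      Γ.invariants := by
  classical
  -- basic facts about the action
  have hσinv : ∀ (h : H) (x : X), σ h⁻¹ (σ h x) = x := fun h x => by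
    rw [← hσmul, inv_mul_cancel, hσone]
  have hσinv' : ∀ (h : H) (x : X), σ h (σ h⁻¹ x) = x := fun h x => by
    rw [← hσmul, mul_inv_cancel, hσone]
  have hΓinv : ∀ (h : H) (v : W), Γ h⁻¹ (Γ h v) = v := fun h v => by
    have h1 : Γ h⁻¹ * Γ h = 1 := by rw [← map_mul, inv_mul_cancel, map_one]
    calc Γ h⁻¹ (Γ h v) = (Γ h⁻¹ * Γ h) v := rfl
      _ = v := by rw [h1]; rfl
  have hmem : ∀ (h : H) (x : X) (v : W), v ∈ Wx x → Γ h v ∈ Wx (σ h x) :=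
    fun h x v hv => by rw [← hσ]; exact Submodule.mem_map_of_mem hv
  -- the projections onto the summands
  set E := LinearEquiv.ofBijective (DirectSum.coeLinearMap Wx) hint with hE
  set π : X → W →ₗ[ℂ] W := fun x =>
    (Wx x).subtype ∘ₗ (DirectSum.component ℂ X (fun x => Wx x) x) ∘ₗ
      (E.symm : W →ₗ[ℂ] DirectSum X fun x => Wx x) with hπdef
  have hπ_apply : ∀ (x : X) (v : W), π x v = ((E.symm v) x : W) := fun x v => rfl
  have hπ_mem : ∀ (x : X) (v : W), π x v ∈ Wx x := fun x v => ((E.symm v) x).2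
  have hπ_single : ∀ (x x' : X) (v : W), v ∈ Wx x' →
      π x v = if x = x' then v else 0 := by
    intro x x' v hv
    by_cases h : x = x'
    · subst h
      rw [if_pos rfl, hπ_apply, hint.ofBijective_coeLinearMap_of_mem hv]
    · rw [if_neg h, hπ_apply]
      have h2 : v = ((⟨v, hv⟩ : Wx x') : W) := rfl
      rw [h2, hint.ofBijective_coeLinearMap_of_ne (fun hc => h hc.symm)]
      rfl
  have hπ_sum : ∀ v : W, ∑ x, π x v = v := by
    intro v
    have h1 : DirectSum.coeLinearMap Wx (E.symm v) = v := E.apply_symm_apply v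
    conv_rhs => rw [← h1, ← DirectSum.sum_univ_of (E.symm v)]
    rw [map_sum]
    exact Finset.sum_congr rfl fun x _ => by
      rw [hπ_apply, DirectSum.coeLinearMap_of]
  -- equivariance of the projections
  have hπ_equiv : ∀ (h : H) (v : W) (x : X), π (σ h x) (Γ h v) = Γ h (π x v) := by
    intro h v x
    conv_lhs => rw [← hπ_sum v]
    rw [map_sum, map_sum]
    rw [Finset.sum_congr rfl (fun x' _ =>
      hπ_single (σ h x) (σ h x') (Γ h (π x' v)) (hmem h x' _ (hπ_mem x' v)))]
    rw [Finset.sum_eq_single x]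
    · rw [if_pos rfl]
    · intro x' _ hne
      rw [if_neg]
      intro hc
      exact hne (by rw [← hσinv h x', ← hc, hσinv])
    · intro hx; exact absurd (Finset.mem_univ x) hx
  -- vectors on the same coset give the same image of w y
  have hcoset : ∀ y ∈ Y, ∀ (a b : H), σ a y = σ b y → Γ a (w y) = Γ b (w y) := by
    intro y hy a b hab
    have hs : σ (b⁻¹ * a) y = y := by
      rw [hσmul, hab, ← hσmul, inv_mul_cancel, hσone]
    have h1 := hYreg y hy (b⁻¹ * a) hs (w y) (hw y hy)
    calc Γ a (w y) = Γ (b * (b⁻¹ * a)) (w y) := by rw [mul_inv_cancel_left]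
      _ = Γ b (Γ (b⁻¹ * a) (w y)) := by rw [map_mul]; rfl
      _ = Γ b (w y) := by rw [h1]
  -- the vectors u y
  set u : X → W := fun x => ∑ t ∈ T x, Γ t (w x) with hudef
  have hπu : ∀ y ∈ Y, ∀ x : X,
      π x (u y) = ∑ t ∈ T y, if x = σ t y then Γ t (w y) else 0 := by
    intro y hy x
    rw [hudef]
    simp only
    rw [map_sum]
    exact Finset.sum_congr rfl fun t _ =>
      hπ_single x (σ t y) (Γ t (w y)) (hmem t y _ (hw y hy))
  -- component of u y at y itself
  have hu_self : ∀ y ∈ Y, π y (u y) = w y := by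
    intro y hy
    obtain ⟨⟨ht₀T, ht₀σ⟩, ht₀u⟩ := (hT y hy 1).choose_spec
    set t₀ := (hT y hy 1).choose
    rw [hσone] at ht₀σ
    rw [hπu y hy y, Finset.sum_eq_single t₀]
    · rw [if_pos ht₀σ.symm]
      have := hcoset y hy t₀ 1 (by rw [ht₀σ, hσone])
      rw [this, map_one]; rfl
    · intro t ht hne
      rw [if_neg]
      intro hc
      exact hne (ht₀u t ⟨ht, by rw [hσone, ← hc]⟩)
    · intro h0; exact absurd ht₀T h0
  -- component of u y at another element of Y
  have hu_other : ∀ y ∈ Y, ∀ y' ∈ Y, y' ≠ y → π y' (u y) = 0 := by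
    intro y hy y' hy' hne
    rw [hπu y hy y']
    apply Finset.sum_eq_zero
    intro t ht
    rw [if_neg]
    intro hc
    obtain ⟨z, _, hzu⟩ := hYrep y (hYreg y hy)
    have h1 : y' = z := hzu y' ⟨hy', ⟨t, hc.symm⟩⟩
    have h2 : y = z := hzu y ⟨hy, ⟨1, hσone y⟩⟩
    exact hne (h1.trans h2.symm)
  -- u y is invariant
  have hu_inv : ∀ y ∈ Y, ∀ g : H, Γ g (u y) = u y := by
    intro y hy g
    have hφ1 : ∀ h : H, (hT y hy h).choose ∈ T y :=
      fun h => (hT y hy h).choose_spec.1.1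
    have hφ2 : ∀ h : H, σ ((hT y hy h).choose) y = σ h y :=
      fun h => (hT y hy h).choose_spec.1.2
    have hφ3 : ∀ (h t : H), t ∈ T y → σ t y = σ h y → t = (hT y hy h).choose :=
      fun h t ht hts => (hT y hy h).choose_spec.2 t ⟨ht, hts⟩
    set φ : H → H := fun h => (hT y hy h).choose with hφdef
    have step1 : Γ g (u y) = ∑ t ∈ T y, Γ (g * t) (w y) := by
      rw [hudef]
      simp only
      rw [map_sum]
      exact Finset.sum_congr rfl fun t _ => by rw [map_mul]; rfl
    rw [step1, hudef]
    simp only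
    refine Finset.sum_nbij' (fun t => φ (g * t)) (fun t => φ (g⁻¹ * t))
      (fun t _ => hφ1 _) (fun t _ => hφ1 _) ?_ ?_ ?_
    · intro t ht
      refine (hφ3 (g⁻¹ * φ (g * t)) t ht ?_).symm
      rw [hσmul, hφ2, hσmul, ← hσmul, inv_mul_cancel, hσone]
    · intro t ht
      refine (hφ3 (g * φ (g⁻¹ * t)) t ht ?_).symm
      rw [hσmul, hφ2, hσmul, ← hσmul, mul_inv_cancel, hσone]
    · intro t _
      exact hcoset y hy (g * t) (φ (g * t)) (hφ2 (g * t)).symm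
  -- linear independence
  have hLI : LinearIndependent ℂ (fun y : Y => u (y : X)) := by
    rw [Fintype.linearIndependent_iff]
    intro g hg i
    have h0 := congrArg (π (i : X)) hg
    rw [map_sum, map_zero] at h0
    rw [Finset.sum_eq_single i] at h0
    · rw [map_smul, hu_self (i : X) i.2] at h0
      rcases smul_eq_zero.mp h0 with h | h
      · exact h
      · exact absurd h (hw0 (i : X) i.2)
    · intro y _ hne
      rw [map_smul, hu_other (y : X) y.2 (i : X) i.2
        (fun hc => hne (Subtype.ext hc).symm), smul_zero]
    · intro h0; exact absurd (Finset.mem_univ i) h0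
  -- the span is contained in the invariants
  have hspan_le : Submodule.span ℂ (Set.range fun y : Y => u (y : X)) ≤
      Γ.invariants := by
    rw [Submodule.span_le]
    rintro v ⟨y, rfl⟩
    exact (Representation.mem_invariants (ρ := Γ) _).mpr
      (fun g => hu_inv (y : X) y.2 g)
  -- the invariants are contained in the span
  have hle_span : Γ.invariants ≤
      Submodule.span ℂ (Set.range fun y : Y => u (y : X)) := by
    intro v hv
    have hvinv : ∀ g : H, Γ g v = v :=
      (Representation.mem_invariants (ρ := Γ) v).mp hv
    -- get coefficients
    have hc : ∀ y ∈ Y, ∃ c : ℂ, π y v = c • w y := by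
      intro y hy
      have h1 : ((⟨w y, hw y hy⟩ : Wx y) : W) ≠ 0 := hw0 y hy
      have h2 : (⟨w y, hw y hy⟩ : Wx y) ≠ 0 := fun hc => h1 (by rw [hc]; rfl)
      obtain ⟨c, hc⟩ := (finrank_eq_one_iff_of_nonzero'
        (⟨w y, hw y hy⟩ : Wx y) h2).mp (hdim y) ⟨π y v, hπ_mem y v⟩
      refine ⟨c, ?_⟩
      have := congrArg (fun z : Wx y => (z : W)) hc
      simpa using this.symm
    choose c hcspec using hc
    set v' : W := v - ∑ y ∈ Y.attach, c (y : X) y.2 • u (y : X) with hv'def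
    -- v' is invariant
    have hv'inv : ∀ g : H, Γ g v' = v' := by
      intro g
      rw [hv'def, map_sub, hvinv, map_sum]
      congr 1
      exact Finset.sum_congr rfl fun y _ => by
        rw [map_smul, hu_inv (y : X) y.2]
    -- the components of v' at elements of Y vanish
    have hv'Y : ∀ y ∈ Y, π y v' = 0 := by
      intro y hy
      rw [hv'def, map_sub, map_sum, Finset.sum_eq_single (⟨y, hy⟩ : {x // x ∈ Y})]
      · rw [map_smul, hu_self y hy, hcspec y hy, sub_self]
      · intro y' _ hne
        rw [map_smul, hu_other (y' : X) y'.2 y hy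
          (fun hc => hne (Subtype.ext hc.symm)), smul_zero]
      · intro h0; exact absurd (Finset.mem_attach Y ⟨y, hy⟩) h0
    -- all components of v' vanish
    have hv'all : ∀ x : X, π x v' = 0 := by
      intro x
      by_contra hne
      -- x is regular
      have hreg : ∀ h : H, σ h x = x → ∀ w₀ ∈ Wx x, Γ h w₀ = w₀ := by
        intro h hh w₀ hw₀
        have hfix : Γ h (π x v') = π x v' := by
          have := hπ_equiv h v' x
          rw [hh, hv'inv h] at this
          exact this.symm
        have h2 : (⟨π x v', hπ_mem x v'⟩ : Wx x) ≠ 0 :=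
          fun hc => hne (by simpa using congrArg (fun z : Wx x => (z : W)) hc)
        obtain ⟨a, ha⟩ := (finrank_eq_one_iff_of_nonzero'
          (⟨π x v', hπ_mem x v'⟩ : Wx x) h2).mp (hdim x) ⟨w₀, hw₀⟩
        have ha' : a • π x v' = w₀ := by
          have := congrArg (fun z : Wx x => (z : W)) ha
          simpa using this
        rw [← ha', map_smul, hfix]
      obtain ⟨y, ⟨hyY, g, hgy⟩, _⟩ := hYrep x hreg
      have h3 : π y v' = Γ g (π x v') := by
        rw [← hgy]
        have := hπ_equiv g v' x
        rw [hv'inv g] at this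
        exact this
      rw [hv'Y y hyY] at h3
      apply hne
      rw [← hΓinv g (π x v'), ← h3, map_zero]
    have hv'0 : v' = 0 := by
      rw [← hπ_sum v']
      exact Finset.sum_eq_zero fun x _ => hv'all x
    have hveq : v = ∑ y ∈ Y.attach, c (y : X) y.2 • u (y : X) := by
      have := sub_eq_zero.mp hv'0
      exact this
    rw [hveq]
    exact Submodule.sum_mem _ fun y _ =>
      Submodule.smul_mem _ _ (Submodule.subset_span ⟨⟨(y : X), y.2⟩, rfl⟩)
  exact ⟨hLI, le_antisymm hspan_le hle_span⟩
end

section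
/- Let Γ be a monomial representation of a finite group H on a monomial space (W, X, (W_x)_{x∈X}). Then the dimension of the invariant subspace W^H equals the number of regular H-orbits in X. -/
/-- the dimension of the invariant subspace `W^H` of a monomial
representation equals the number of regular `H`-orbits in `X` (orbits all of
whose elements are regular). -/
theorem stmt_9 {H : Type*} [Group H] [Fintype H]
    {W : Type*} [AddCommGroup W] [Module ℂ W] [FiniteDimensional ℂ W]
    {X : Type*} [Fintype X] [DecidableEq X]
    (Wx : X → Submodule ℂ W)
    (hdim : ∀ x, Module.finrank ℂ (Wx x) = 1)
    (hint : DirectSum.IsInternal Wx)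
    (Γ : Representation ℂ H W)
    (σ : H → X → X)
    (hσ : ∀ h x, Submodule.map (Γ h) (Wx x) = Wx (σ h x))
    (hσone : ∀ x, σ 1 x = x)
    (hσmul : ∀ h₁ h₂ x, σ (h₁ * h₂) x = σ h₁ (σ h₂ x)) :
    Module.finrank ℂ Γ.invariants =
      Set.ncard {O : Set X | (∃ x : X, O = {y : X | ∃ h : H, σ h x = y}) ∧
        ∀ z ∈ O, ∀ h : H, σ h z = z → ∀ w ∈ Wx z, Γ h w = w} := by
  classical
  choose v hv0 hvspan using fun x => (finrank_eq_one_iff' (K := ℂ) (V := Wx x)).mp (hdim x)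
  let B : Module.Basis X ℂ W :=
    (hint.collectedBasis fun x => FiniteDimensional.basisSingleton (Fin 1) (hdim x) (v x) (hv0 x)).reindex
      (Equiv.sigmaUnique X fun _ => Fin 1)
  have hBcoe : ∀ x : X, B x = (v x : W) := by
    intro x
    simp only [B, Module.Basis.reindex_apply, Equiv.sigmaUnique_symm_apply,
      DirectSum.IsInternal.collectedBasis_coe]
    simp [FiniteDimensional.basisSingleton_apply]
  have hBmem : ∀ x, B x ∈ Wx x := by
    intro x; rw [hBcoe]; exact (v x).2
  have hB0 : ∀ x, B x ≠ 0 := fun x => B.ne_zero x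
  have hspan : ∀ x, ∀ w ∈ Wx x, ∃ cc : ℂ, w = cc • B x := by
    intro x w hw
    obtain ⟨cc, hcc⟩ := hvspan x ⟨w, hw⟩
    exact ⟨cc, by rw [hBcoe, ← Submodule.coe_smul, hcc]⟩
  -- the monomial cocycle
  have hΓmem : ∀ (h : H) x, Γ h (B x) ∈ Wx (σ h x) := by
    intro h x
    rw [← hσ h x]
    exact Submodule.mem_map_of_mem (hBmem x)
  choose c hc using fun (h : H) (x : X) => hspan (σ h x) (Γ h (B x)) (hΓmem h x)
  have hΓinj : ∀ h : H, Function.Injective (Γ h) := by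
    intro h
    intro u w huw
    have : Γ h⁻¹ (Γ h u) = Γ h⁻¹ (Γ h w) := by rw [huw]
    simpa [← Module.End.mul_apply, ← map_mul] using this
  have hc0 : ∀ (h : H) x, c h x ≠ 0 := by
    intro h x hc'
    have : Γ h (B x) = Γ h 0 := by rw [hc h x, hc', zero_smul, map_zero]
    exact hB0 x (hΓinj h this)
  have hcone : ∀ x, c 1 x = 1 := by
    intro x
    have h1 : Γ (1 : H) (B x) = B x := by simp
    have h2 := hc 1 x
    rw [h1, hσone x] at h2
    refine smul_left_injective ℂ (hB0 x) ?_
    show c 1 x • B x = (1:ℂ) • B x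
    simpa using h2.symm
  have hcmul : ∀ (g h : H) x, c (g * h) x = c g (σ h x) * c h x := by
    intro g h x
    have e1 : Γ (g * h) (B x) = c (g * h) x • B (σ g (σ h x)) := by
      rw [hc (g * h) x, hσmul]
    have e2 : Γ (g * h) (B x) = (c g (σ h x) * c h x) • B (σ g (σ h x)) := by
      have : Γ (g * h) (B x) = Γ g (Γ h (B x)) := by
        rw [map_mul]; rfl
      rw [this, hc h x, map_smul, hc g (σ h x), smul_smul, mul_comm]
    exact (smul_left_injective ℂ (hB0 _)) (e1.symm.trans e2)
  -- regularity in terms of the cocycle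
  have hreg1 : ∀ (h : H) z, σ h z = z → (∀ w ∈ Wx z, Γ h w = w) → c h z = 1 := by
    intro h z hz hw
    have h2 := hc h z
    rw [hz, hw (B z) (hBmem z)] at h2
    refine smul_left_injective ℂ (hB0 z) ?_
    show c h z • B z = (1:ℂ) • B z
    simpa using h2.symm
  have hreg2 : ∀ (h : H) z, σ h z = z → c h z = 1 → ∀ w ∈ Wx z, Γ h w = w := by
    intro h z hz h1 w hw
    obtain ⟨cc, rfl⟩ := hspan z w hw
    rw [map_smul, hc h z, hz, h1, one_smul]
  -- σ h is a permutation
  let τ : H → Equiv.Perm X := fun h =>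
    ⟨σ h, σ h⁻¹, fun x => by rw [← hσmul, inv_mul_cancel, hσone],
      fun x => by rw [← hσmul, mul_inv_cancel, hσone]⟩
  -- coordinates of sums
  have hrepr : ∀ (g : X → ℂ) (y : X), B.repr (∑ x, g x • B x) y = g y := by
    intro g y
    rw [map_sum]
    simp only [map_smul, Module.Basis.repr_self]
    rw [Finsupp.finset_sum_apply]
    simp [Finsupp.single_apply]
  have hGsum : ∀ (h : H) (a : X → ℂ), Γ h (∑ x, a x • B x)
      = ∑ y, (c h ((τ h).symm y) * a ((τ h).symm y)) • B y := by
    intro h a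
    rw [map_sum, ← Equiv.sum_comp (τ h) (fun y => (c h ((τ h).symm y) * a ((τ h).symm y)) • B y)]
    refine Finset.sum_congr rfl fun x _ => ?_
    simp only [Equiv.symm_apply_apply]
    rw [map_smul, hc h x]
    show _ = (c h x * a x) • B (σ h x)
    rw [smul_smul, mul_comm]
  have hinv_iff : ∀ w : W, (∀ h, Γ h w = w) ↔
      (∀ (h : H) x, B.repr w (σ h x) = c h x * B.repr w x) := by
    intro w
    constructor
    · intro hw h x
      have hG := hw h
      conv_lhs at hG => rw [← B.sum_repr w]
      rw [hGsum h (fun x => B.repr w x)] at hG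
      have h2 := congrArg (fun u => B.repr u (σ h x)) hG
      rw [hrepr] at h2
      have h3 : (τ h).symm (σ h x) = x := (τ h).symm_apply_apply x
      rw [h3] at h2
      exact h2.symm
    · intro ha h
      have e : Γ h w = Γ h (∑ x, B.repr w x • B x) := by
        rw [B.sum_repr]
      rw [e, hGsum]
      conv_rhs => rw [← B.sum_repr w]
      refine Finset.sum_congr rfl fun y _ => ?_
      congr 1
      have h4 := ha h ((τ h).symm y)
      have h3 : σ h ((τ h).symm y) = y := (τ h).apply_symm_apply y
      rw [h3] at h4
      exact h4.symm
  -- orbits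
  let orb : X → Set X := fun z => {y | ∃ h : H, σ h z = y}
  have horbmem : ∀ z, z ∈ orb z := fun z => ⟨1, hσone z⟩
  have horbeq : ∀ (g : H) z, orb (σ g z) = orb z := by
    intro g z
    ext y
    constructor
    · rintro ⟨k, rfl⟩
      exact ⟨k * g, hσmul k g z⟩
    · rintro ⟨k, rfl⟩
      exact ⟨k * g⁻¹, by rw [← hσmul, inv_mul_cancel_right]⟩
  set R : Set (Set X) := {O : Set X | (∃ x : X, O = {y : X | ∃ h : H, σ h x = y}) ∧
        ∀ z ∈ O, ∀ h : H, σ h z = z → ∀ w ∈ Wx z, Γ h w = w} with hRdef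
  choose rep hrep using fun (O : ↥R) => O.2.1
  have hrep' : ∀ O : ↥R, O.1 = orb (rep O) := fun O => hrep O
  have hrepmem : ∀ O : ↥R, rep O ∈ O.1 := by
    intro O
    rw [hrep' O]
    exact horbmem (rep O)
  have hex : ∀ (O : ↥R) (z : X), z ∈ O.1 → ∃ g : H, σ g (rep O) = z := by
    intro O z hz
    rw [hrep' O] at hz
    exact hz
  choose gg hgg using hex
  have hwd : ∀ (O : ↥R) (g g' : H), σ g (rep O) = σ g' (rep O) → c g (rep O) = c g' (rep O) := by
    intro O g g' hgg'
    have hk : σ (g'⁻¹ * g) (rep O) = rep O := by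
      rw [hσmul, hgg', ← hσmul, inv_mul_cancel, hσone]
    have hregO : ∀ w ∈ Wx (rep O), Γ (g'⁻¹ * g) w = w := O.2.2 (rep O) (hrepmem O) (g'⁻¹ * g) hk
    have hc1 : c (g'⁻¹ * g) (rep O) = 1 := hreg1 _ _ hk hregO
    have hmul := hcmul g' (g'⁻¹ * g) (rep O)
    rw [hk, hc1, mul_one, mul_inv_cancel_left] at hmul
    exact hmul
  -- the solution space
  let S : Submodule ℂ (X → ℂ) :=
    { carrier := {a | ∀ (h : H) x, a (σ h x) = c h x * a x}
      add_mem' := by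
        intro a b ha hb h x
        simp only [Pi.add_apply, ha h x, hb h x]
        ring
      zero_mem' := by
        intro h x
        simp
      smul_mem' := by
        intro t a ha h x
        simp only [Pi.smul_apply, ha h x, smul_eq_mul]
        ring }
  -- invariants ≃ S
  let φ : Γ.invariants →ₗ[ℂ] S :=
    { toFun := fun w => ⟨fun x => B.repr w.1 x, fun h x => (hinv_iff w.1).mp w.2 h x⟩
      map_add' := by
        intro u v
        apply Subtype.ext
        funext x
        simp
      map_smul' := by
        intro t u
        apply Subtype.ext
        funext x
        simp }
  let ψ : S →ₗ[ℂ] Γ.invariants :=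
    { toFun := fun a => ⟨∑ x, a.1 x • B x, by
        rw [Representation.mem_invariants]
        refine (hinv_iff _).mpr ?_
        intro h x
        rw [hrepr, hrepr]
        exact a.2 h x⟩
      map_add' := by
        intro a b
        apply Subtype.ext
        simp [add_smul, Finset.sum_add_distrib]
      map_smul' := by
        intro t a
        apply Subtype.ext
        simp [smul_smul, Finset.smul_sum] }
  let e1 : Γ.invariants ≃ₗ[ℂ] S := by
    refine LinearEquiv.ofLinear φ ψ ?_ ?_
    · apply LinearMap.ext
      intro a
      apply Subtype.ext
      funext x
      show B.repr (∑ y, a.1 y • B y) x = a.1 x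
      rw [hrepr]
    · apply LinearMap.ext
      intro w
      apply Subtype.ext
      show ∑ x, B.repr w.1 x • B x = w.1
      exact B.sum_repr w.1
  -- S ≃ (R → ℂ)
  let ε : S →ₗ[ℂ] (↥R → ℂ) :=
    { toFun := fun a O => a.1 (rep O)
      map_add' := fun a b => rfl
      map_smul' := fun t a => rfl }
  have hεinj : Function.Injective ε := by
    refine (injective_iff_map_eq_zero ε).mpr ?_
    intro a ha0
    apply Subtype.ext
    funext z
    have h0 : ∀ O : ↥R, a.1 (rep O) = 0 := fun O => congrFun ha0 O
    show a.1 z = 0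
    by_cases hz : orb z ∈ R
    · have hg := hgg ⟨orb z, hz⟩ z (horbmem z)
      have h1 := a.2 (gg ⟨orb z, hz⟩ z (horbmem z)) (rep ⟨orb z, hz⟩)
      rw [hg, h0] at h1
      rw [h1, mul_zero]
    · have hz' : ¬ ∀ y ∈ orb z, ∀ h : H, σ h y = y → ∀ w ∈ Wx y, Γ h w = w := by
        intro hcon
        exact hz ⟨⟨z, rfl⟩, hcon⟩
      push_neg at hz'
      obtain ⟨y, hy, h, hhy, w, hw, hΓw⟩ := hz'
      have hcne : c h y ≠ 1 := fun h1 => hΓw (hreg2 h y hhy h1 w hw)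
      have hay : a.1 y = 0 := by
        have h2 := a.2 h y
        rw [hhy] at h2
        by_contra hane
        have h3 : c h y * a.1 y = 1 * a.1 y := by rw [one_mul]; exact h2.symm
        exact hcne (mul_right_cancel₀ hane h3)
      obtain ⟨g, hg⟩ := hy
      have h4 := a.2 g z
      rw [hg, hay] at h4
      exact ((mul_eq_zero.mp h4.symm).resolve_left (hc0 g z))
  have hεsurj : Function.Surjective ε := by
    intro b
    set a : X → ℂ := fun z => if hz : orb z ∈ R then
        c (gg ⟨orb z, hz⟩ z (horbmem z)) (rep ⟨orb z, hz⟩) * b ⟨orb z, hz⟩ else 0 with hadef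
    have hval : ∀ (O : ↥R) (g : H) (z : X), σ g (rep O) = z → a z = c g (rep O) * b O := by
      rintro ⟨Oset, hOR⟩ g z hgz
      have hOz : orb z = Oset := by
        rw [← hgz, horbeq g]
        exact (hrep' ⟨Oset, hOR⟩).symm
      have hz : orb z ∈ R := hOz ▸ hOR
      have hOO : (⟨orb z, hz⟩ : ↥R) = ⟨Oset, hOR⟩ := Subtype.ext hOz
      rw [← hOO] at hgz ⊢
      have heq : σ (gg ⟨orb z, hz⟩ z (horbmem z)) (rep ⟨orb z, hz⟩) = σ g (rep ⟨orb z, hz⟩) := by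
        rw [hgg, hgz]
      have hcc := hwd ⟨orb z, hz⟩ _ g heq
      simp only [hadef]
      rw [dif_pos hz, hcc]
    have haS : a ∈ S := by
      intro h z
      by_cases hz : orb z ∈ R
      · have hg := hgg ⟨orb z, hz⟩ z (horbmem z)
        have h1 : a z = c (gg ⟨orb z, hz⟩ z (horbmem z)) (rep ⟨orb z, hz⟩) * b ⟨orb z, hz⟩ :=
          hval ⟨orb z, hz⟩ _ z hg
        have h2 : a (σ h z) = c (h * gg ⟨orb z, hz⟩ z (horbmem z)) (rep ⟨orb z, hz⟩) * b ⟨orb z, hz⟩ := by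
          refine hval ⟨orb z, hz⟩ _ _ ?_
          rw [hσmul, hg]
        rw [h2, h1, hcmul, hg]
        ring
      · have hz2 : ¬ (orb (σ h z) ∈ R) := by
          rw [horbeq h z]
          exact hz
        have e1 : a z = 0 := by
          simp only [hadef]
          rw [dif_neg hz]
        have e2 : a (σ h z) = 0 := by
          simp only [hadef]
          rw [dif_neg hz2]
        rw [e1, e2, mul_zero]
    refine ⟨⟨a, haS⟩, ?_⟩
    funext O
    show a (rep O) = b O
    rw [hval O 1 (rep O) (hσone _), hcone, one_mul]
  let e2 : S ≃ₗ[ℂ] (↥R → ℂ) := LinearEquiv.ofBijective ε ⟨hεinj, hεsurj⟩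
  haveI : Finite (Set X) := inferInstance
  haveI : Fintype ↥R := Fintype.ofFinite _
  calc Module.finrank ℂ Γ.invariants = Module.finrank ℂ S := e1.finrank_eq
    _ = Module.finrank ℂ (↥R → ℂ) := e2.finrank_eq
    _ = Fintype.card ↥R := Module.finrank_pi ℂ
    _ = Nat.card ↥R := Nat.card_eq_fintype_card.symm
    _ = R.ncard := Nat.card_coe_set_eq R
end
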